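/- arXiv:2007.11643 — 3 statements merged into one kernel-verified Lean document; each statement's English description precedes it below -/
import Mathlib

section
/- If (G,k) is a yes-instance of Path Contraction with G having n vertices, then G has at most n - 1 + (k² + 5k + 4)/2 edges. -/
open SimpleGraph

variable {V : Type*}

/-- The setoid identifying vertices connected by edges of `C`. -/
def contractSetoid (C : Set (Sym2 V)) : Setoid V :=
  (SimpleGraph.fromEdgeSet C).reachableSetoid

/-- The graph obtained from `G` by contracting every edge in `C`
(merging endpoints, removing loops and parallel edges). -/
def contract (G : SimpleGraph V) (C : Set (Sym2 V)) :
    SimpleGraph (Quotient (contractSetoid C)) where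
  Adj a b := a ≠ b ∧ ∃ u v : V,
    Quotient.mk (contractSetoid C) u = a ∧ Quotient.mk (contractSetoid C) v = b ∧ G.Adj u v
  symm := by
    constructor
    rintro a b ⟨hab, u, v, hu, hv, h⟩
    exact ⟨hab.symm, v, u, hv, hu, h.symm⟩
  loopless := by constructor; rintro a ⟨h, -⟩; exact h rfl

/-- `H` is a simple path (path graph). -/
def IsPathGraph {W : Type*} (H : SimpleGraph W) : Prop :=
  ∃ n : ℕ, Nonempty (H ≃g SimpleGraph.pathGraph n)

/-- `C` is a solution of the Path Contraction instance `(G, k)`. -/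
def PCSolution (G : SimpleGraph V) (k : ℕ) (C : Finset (Sym2 V)) : Prop :=
  ↑C ⊆ G.edgeSet ∧ C.card ≤ k ∧ IsPathGraph (contract G ↑C)

/-- `(G, k)` is a yes-instance of Path Contraction. -/
def PCYes (G : SimpleGraph V) (k : ℕ) : Prop :=
  ∃ C : Finset (Sym2 V), PCSolution G k C

/-!
Let `C` be a solution and number the classes of `G / C` by their position `0, …, m - 1` on the
path; class `i` has `t i ≥ 1` vertices. Each edge of `C` merges at most two classes, so
`n = ∑ t i ≤ m + k`. Every edge of `G` lies inside a class or joins two consecutive classes, so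
`|E(G)| ≤ ∑ (C(t i, 2) + t i * t (i + 1))`. With `t i = e i + 1` the quadratic part of this sum
is controlled by `∑ e i ^ 2 + 2 ∑ e i * e (i + 1) ≤ (∑ e i) ^ 2`, and `∑ e i = n - m ≤ k`.
-/

open Finset

theorem Nat.card_le_card_add_one_of_injOn {α β : Type*} [Finite α] [Finite β] (f : α → β)
    (a : α) (hf : Set.InjOn f {a}ᶜ) : Nat.card α ≤ Nat.card β + 1 := by
  have := Set.ncard_le_ncard_of_injOn f (fun _ _ ↦ Set.mem_univ _) hf
  rw [Set.ncard_univ, Set.ncard_compl, Set.ncard_singleton] at this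
  omega

theorem reachable_fromEdgeSet_insert {C : Set (Sym2 V)} {x y u v : V}
    (h : (fromEdgeSet (insert s(x, y) C)).Reachable u v) :
    (fromEdgeSet C).Reachable u v ∨
      (fromEdgeSet C).Reachable u x ∧ (fromEdgeSet C).Reachable y v ∨
      (fromEdgeSet C).Reachable u y ∧ (fromEdgeSet C).Reachable x v := by
  obtain ⟨w⟩ := h
  induction w with
  | nil => exact .inl .rfl
  | @cons a b c hab _ ih =>
    obtain ⟨hmem, hne⟩ := (fromEdgeSet_adj _).mp hab
    rcases Set.mem_insert_iff.mp hmem with heq | hC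
    · rcases Sym2.eq_iff.mp heq with ⟨rfl, rfl⟩ | ⟨rfl, rfl⟩ <;>
        rcases ih with h | ⟨h₁, h₂⟩ | ⟨h₁, h₂⟩ <;> tauto
    · have hab : (fromEdgeSet C).Reachable a b := ((fromEdgeSet_adj C).mpr ⟨hC, hne⟩).reachable
      rcases ih with h | ⟨h₁, h₂⟩ | ⟨h₁, h₂⟩
      · exact .inl (hab.trans h)
      · exact .inr (.inl ⟨hab.trans h₁, h₂⟩)
      · exact .inr (.inr ⟨hab.trans h₁, h₂⟩)

theorem card_quotient_contractSetoid_le_insert [Finite V] (C : Set (Sym2 V)) (e : Sym2 V) :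
    Nat.card (Quotient (contractSetoid C)) ≤
      Nat.card (Quotient (contractSetoid (insert e C))) + 1 := by
  induction e using Sym2.ind with | _ x y => ?_
  have hle : fromEdgeSet C ≤ fromEdgeSet (insert s(x, y) C) :=
    fromEdgeSet_mono (Set.subset_insert _ _)
  refine Nat.card_le_card_add_one_of_injOn
    (Quotient.map id fun _ _ h ↦ h.mono hle) (Quotient.mk _ x) ?_
  intro p hp q hq hpq
  induction p using Quotient.inductionOn
  induction q using Quotient.inductionOn
  simp only [Set.mem_compl_iff, Set.mem_singleton_iff] at hp hq
  rcases reachable_fromEdgeSet_insert (Quotient.exact hpq) with h | ⟨h, -⟩ | ⟨-, h⟩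
  · exact Quotient.sound h
  · exact absurd (Quotient.sound h) hp
  · exact absurd (Quotient.sound h.symm) hq

theorem card_le_card_quotient_contractSetoid_add_card [Fintype V] (C : Finset (Sym2 V)) :
    Fintype.card V ≤ Nat.card (Quotient (contractSetoid (C : Set (Sym2 V)))) + #C := by
  classical
  induction C using Finset.induction with
  | empty =>
    rw [← Nat.card_eq_fintype_card, card_empty, add_zero]
    refine Nat.card_le_card_of_injective (Quotient.mk _) fun u v h ↦ ?_
    have huv : (fromEdgeSet ((∅ : Finset (Sym2 V)) : Set (Sym2 V))).Reachable u v :=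
      Quotient.exact h
    simpa using huv
  | insert e C he ih =>
    rw [card_insert_of_notMem he, coe_insert]
    have := card_quotient_contractSetoid_le_insert (C : Set (Sym2 V)) e
    omega

theorem contract_adj_mk {G : SimpleGraph V} {C : Set (Sym2 V)} {u v : V} (h : G.Adj u v)
    (huv : Quotient.mk (contractSetoid C) u ≠ Quotient.mk (contractSetoid C) v) :
    (contract G C).Adj (Quotient.mk _ u) (Quotient.mk _ v) :=
  ⟨huv, u, v, rfl, rfl, h⟩

theorem contract_iso_pathGraph_val_le_succ {G : SimpleGraph V} {C : Set (Sym2 V)} {m : ℕ}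
    (φ : contract G C ≃g pathGraph m) {u v : V} (h : G.Adj u v) :
    (φ (Quotient.mk _ v) : ℕ) ≤ φ (Quotient.mk _ u) + 1 := by
  by_cases huv : Quotient.mk (contractSetoid C) u = Quotient.mk (contractSetoid C) v
  · rw [huv]; omega
  · have := pathGraph_adj.mp (φ.map_rel_iff.mpr (contract_adj_mk h huv))
    omega

theorem card_edgeFinset_le_sum_of_adj_le_succ [Fintype V] [DecidableEq V] (G : SimpleGraph V)
    [DecidableRel G.Adj] (f : V → ℕ) {m : ℕ} (hf : ∀ v, f v < m)
    (hadj : ∀ ⦃u v⦄, G.Adj u v → f v ≤ f u + 1) :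
    #G.edgeFinset ≤ ∑ i ∈ range m,
      ((#{v | f v = i}).choose 2 + #{v | f v = i} * #{v | f v = i + 1}) := by
  set A : ℕ → Finset V := fun i ↦ {v | f v = i}
  have hsub : G.edgeFinset ⊆ (range m).biUnion fun i ↦
      (A i).offDiag.image Sym2.mk.uncurry ∪ (A i ×ˢ A (i + 1)).image Sym2.mk.uncurry := by
    intro e he
    induction e using Sym2.ind with | _ u v => ?_
    have huv : G.Adj u v := by simpa using he
    simp only [mem_biUnion, mem_range, mem_union, mem_image, mem_offDiag, mem_product, Prod.exists,
      Function.uncurry_apply_pair, A, mem_filter, mem_univ, true_and]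
    rcases lt_trichotomy (f u) (f v) with h | h | h
    · have := hadj huv
      exact ⟨f u, hf u, Or.inr ⟨u, v, ⟨rfl, by omega⟩, rfl⟩⟩
    · exact ⟨f u, hf u, Or.inl ⟨u, v, ⟨rfl, h.symm, huv.ne⟩, rfl⟩⟩
    · have := hadj huv.symm
      exact ⟨f v, hf v, Or.inr ⟨v, u, ⟨rfl, by omega⟩, Sym2.eq_swap⟩⟩
  calc #G.edgeFinset
      ≤ ∑ i ∈ range m, #((A i).offDiag.image Sym2.mk.uncurry
          ∪ (A i ×ˢ A (i + 1)).image Sym2.mk.uncurry) :=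
        (card_le_card hsub).trans card_biUnion_le
    _ ≤ _ := sum_le_sum fun i _ ↦ (card_union_le _ _).trans <| add_le_add
        (Sym2.card_image_offDiag _).le (card_image_le.trans (card_product _ _).le)

theorem sum_sq_add_two_mul_sum_mul_succ_le_sq_sum (e : ℕ → ℕ) (m : ℕ) :
    ∑ i ∈ range (m + 1), e i ^ 2 + 2 * ∑ i ∈ range m, e i * e (i + 1)
      ≤ (∑ i ∈ range (m + 1), e i) ^ 2 := by
  induction m with
  | zero => simp
  | succ m ih =>
    have hle : e m ≤ ∑ i ∈ range (m + 1), e i :=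
      single_le_sum (fun _ _ ↦ Nat.zero_le _) (self_mem_range_succ m)
    rw [sum_range_succ (fun i ↦ e i ^ 2), sum_range_succ (fun i ↦ e i * e (i + 1)),
      sum_range_succ e (m + 1)]
    nlinarith

theorem two_mul_sum_choose_two_add_mul_succ_le (t : ℕ → ℕ) (m k : ℕ)
    (ht : ∀ i < m, 0 < t i) (htm : t m = 0) (hk : ∑ i ∈ range m, t i ≤ m + k) :
    2 * ∑ i ∈ range m, ((t i).choose 2 + t i * t (i + 1))
      ≤ 2 * ∑ i ∈ range m, t i + k ^ 2 + 3 * k := by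
  obtain ⟨e, he⟩ : ∃ e : ℕ → ℕ, ∀ i, e i = t i - 1 := ⟨_, fun _ ↦ rfl⟩
  obtain ⟨s, hs⟩ : ∃ s, s = ∑ i ∈ range (m + 1), e i := ⟨_, rfl⟩
  have hsm : s + m = ∑ i ∈ range m, t i := by
    have : ∑ i ∈ range m, (e i + 1) = ∑ i ∈ range m, t i :=
      sum_congr rfl fun i hi ↦ by have := ht i (mem_range.mp hi); rw [he]; omega
    rw [hs, sum_range_succ, he m, htm, ← this, sum_add_distrib, sum_const, card_range]
    simp
  have hterm : ∀ i, 2 * ((t i).choose 2 + t i * t (i + 1))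
      ≤ e i ^ 2 + 2 * (e i * e (i + 1)) + 3 * e i + 2 * e (i + 1) + 2 := by
    intro i
    have h1 : t i ≤ e i + 1 := by rw [he]; omega
    have h2 : t (i + 1) ≤ e (i + 1) + 1 := by rw [he]; omega
    have h3 : 2 * (t i).choose 2 ≤ (e i + 1) * e i := by
      rw [Nat.choose_two_right]
      have := Nat.div_mul_le_self (t i * (t i - 1)) 2
      have : t i * (t i - 1) ≤ (e i + 1) * e i := Nat.mul_le_mul h1 (by rw [he])
      omega
    nlinarith [Nat.mul_le_mul h1 h2]
  have hsq := sum_sq_add_two_mul_sum_mul_succ_le_sq_sum e m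
  have hsq_le : ∑ i ∈ range m, e i ^ 2 ≤ ∑ i ∈ range (m + 1), e i ^ 2 :=
    sum_le_sum_of_subset (range_subset_range.mpr m.le_succ)
  have hsum_le : ∑ i ∈ range m, e i ≤ s :=
    hs ▸ sum_le_sum_of_subset (range_subset_range.mpr m.le_succ)
  have hsum_succ_le : ∑ i ∈ range m, e (i + 1) ≤ s := by
    rw [hs, sum_range_succ' e m]
    exact Nat.le_add_right _ _
  have hsk : s ^ 2 ≤ k ^ 2 := Nat.pow_le_pow_left (by omega) 2
  rw [← hs] at hsq
  calc 2 * ∑ i ∈ range m, ((t i).choose 2 + t i * t (i + 1))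
      = ∑ i ∈ range m, 2 * ((t i).choose 2 + t i * t (i + 1)) := mul_sum _ _ _
    _ ≤ ∑ i ∈ range m, (e i ^ 2 + 2 * (e i * e (i + 1)) + 3 * e i + 2 * e (i + 1) + 2) :=
      sum_le_sum fun i _ ↦ hterm i
    _ = ∑ i ∈ range m, e i ^ 2 + 2 * ∑ i ∈ range m, e i * e (i + 1)
          + 3 * ∑ i ∈ range m, e i + 2 * ∑ i ∈ range m, e (i + 1) + 2 * m := by
      simp only [sum_add_distrib, ← mul_sum, sum_const, card_range, smul_eq_mul]; ring
    _ ≤ 2 * ∑ i ∈ range m, t i + k ^ 2 + 3 * k := by omega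

/-- If `(G, k)` is a yes-instance of Path Contraction on `n` vertices, then `G` has
at most `n - 1 + (k² + 5k + 4)/2` edges. -/
theorem stmt_3 [Fintype V] (G : SimpleGraph V) (k : ℕ) (h : PCYes G k) :
    G.edgeSet.ncard ≤ Fintype.card V - 1 + (k ^ 2 + 5 * k + 4) / 2 := by
  classical
  obtain ⟨C, -, hCk, m, ⟨φ⟩⟩ := h
  set f : V → ℕ := fun v ↦ φ (Quotient.mk _ v)
  set t : ℕ → ℕ := fun i ↦ #{v | f v = i}
  have hf : ∀ v, f v < m := fun v ↦ (φ _).isLt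
  have hn : Fintype.card V = ∑ i ∈ range m, t i :=
    card_eq_sum_card_fiberwise fun v _ ↦ mem_range.mpr (hf v)
  have hnk : Fintype.card V ≤ m + k := by
    have := card_le_card_quotient_contractSetoid_add_card C
    rw [Nat.card_congr φ.toEquiv, Nat.card_fin] at this
    omega
  have ht : ∀ i < m, 0 < t i := fun i hi ↦ by
    obtain ⟨v, hv⟩ := Quotient.exists_rep (φ.symm ⟨i, hi⟩)
    exact card_pos.mpr ⟨v, by simp [f, hv]⟩
  have htm : t m = 0 := card_eq_zero.mpr <| filter_eq_empty_iff.mpr fun v _ ↦ (hf v).ne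
  have hE : #G.edgeFinset ≤ ∑ i ∈ range m, ((t i).choose 2 + t i * t (i + 1)) :=
    card_edgeFinset_le_sum_of_adj_le_succ G f hf fun u v ↦ contract_iso_pathGraph_val_le_succ φ
  have hsum := two_mul_sum_choose_two_add_mul_succ_le t m k ht htm (hn ▸ hnk)
  rw [← coe_edgeFinset, Set.ncard_coe_finset]
  omega
end

section
/- If (G,k) is a yes-instance of Path Contraction and G' is obtained from G by contracting an arbitrary edge, then (G',k) is also a yes-instance. -/
/-!
Let `C` be a solution for `(G, k)` and `q : G → G / uv` the quotient map. The images under `q`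
of the edges of `C`, minus the loops, form a set `C'` with `|C'| ≤ |C|`, and contracting `C'`
in `G / uv` is the same as contracting `C ∪ {uv}` in `G`, i.e. contracting the image of `uv`
in the path `G / C`. Since `uv` is an edge of `G`, that image is a loop or an edge of the path,
and contracting an edge of a path yields a shorter path.
-/

open SimpleGraph

variable {V : Type*}

open Function

variable {W : Type*}

theorem SimpleGraph.Reachable.lift {G : SimpleGraph V} {H : SimpleGraph W} (f : V → W)
    (hf : ∀ x y, G.Adj x y → H.Reachable (f x) (f y)) {x y : V} (h : G.Reachable x y) :
    H.Reachable (f x) (f y) := by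
  obtain ⟨p⟩ := h
  induction p with
  | nil => rfl
  | cons hadj _ ih => exact (hf _ _ hadj).trans ih

theorem SimpleGraph.Reachable.apply_eq {G : SimpleGraph V} (f : V → W)
    (hf : ∀ x y, G.Adj x y → f x = f y) {x y : V} (h : G.Reachable x y) : f x = f y :=
  reachable_bot.1 (h.lift f fun x y hxy => reachable_bot.2 (hf x y hxy))

section Contraction

variable {G : SimpleGraph V} {S : Set (Sym2 V)}

theorem contract_mk_eq_iff {x y : V} :
    Quotient.mk (contractSetoid S) x = Quotient.mk (contractSetoid S) y ↔
      (fromEdgeSet S).Reachable x y :=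
  Quotient.eq

theorem contract_mk_eq_or_adj {x y : V} (h : G.Adj x y) :
    Quotient.mk (contractSetoid S) x = Quotient.mk (contractSetoid S) y ∨
      (contract G S).Adj (Quotient.mk (contractSetoid S) x) (Quotient.mk (contractSetoid S) y) :=
  or_iff_not_imp_left.2 fun hne => ⟨hne, x, y, rfl, rfl, h⟩

theorem map_mk_mem_edgeSet_contract {z : Sym2 V} (hz : z ∈ G.edgeSet)
    (hdiag : ¬ (Sym2.map (Quotient.mk (contractSetoid S)) z).IsDiag) :
    Sym2.map (Quotient.mk (contractSetoid S)) z ∈ (contract G S).edgeSet := by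
  induction z using Sym2.ind with
  | _ x y => exact ⟨by simpa using hdiag, x, y, rfl, rfl, hz⟩

noncomputable def contractIsoOfSurjective {H : SimpleGraph W} (f : V → W) (hf : Surjective f)
    (hker : ∀ x y, f x = f y ↔ (fromEdgeSet S).Reachable x y)
    (hmap : ∀ x y, G.Adj x y → f x ≠ f y → H.Adj (f x) (f y))
    (hlift : ∀ a b, H.Adj a b → ∃ x y, f x = a ∧ f y = b ∧ G.Adj x y) :
    contract G S ≃g H where
  toEquiv := Equiv.ofBijective (Quotient.lift f fun x y h => (hker x y).2 h)
    ⟨fun a b => Quotient.inductionOn₂ a b fun x y h => Quotient.sound ((hker x y).1 h),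
      fun w => (hf w).elim fun x hx => ⟨Quotient.mk _ x, hx⟩⟩
  map_rel_iff' {a b} := by
    induction a using Quotient.ind with | _ x =>
    induction b using Quotient.ind with | _ y =>
    show H.Adj (f x) (f y) ↔ (contract G S).Adj _ _
    constructor
    · intro h
      obtain ⟨x', y', hx', hy', hadj⟩ := hlift _ _ h
      refine ⟨fun he => h.ne ((hker x y).2 (Quotient.exact he)), x', y', ?_, ?_, hadj⟩
      · exact Quotient.sound ((hker x' x).1 hx')
      · exact Quotient.sound ((hker y' y).1 hy')
    · rintro ⟨hne, x', y', hx', hy', hadj⟩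
      have hfx : f x' = f x := (hker x' x).2 (Quotient.exact hx')
      have hfy : f y' = f y := (hker y' y).2 (Quotient.exact hy')
      rw [← hfx, ← hfy]
      refine hmap x' y' hadj fun he => hne ?_
      rw [← hx', ← hy']
      exact Quotient.sound ((hker x' y').1 he)

theorem reachable_map_mk_iff (T : Set (Sym2 V)) (x y : V) :
    (fromEdgeSet (Sym2.map (Quotient.mk (contractSetoid S)) '' T)).Reachable
        (Quotient.mk (contractSetoid S) x) (Quotient.mk (contractSetoid S) y) ↔
      (fromEdgeSet (S ∪ T)).Reachable x y := by
  have hout : ∀ a, (fromEdgeSet (S ∪ T)).Reachable (Quotient.mk (contractSetoid S) a).out a :=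
    fun a => (Quotient.mk_out (s := contractSetoid S) a).mono
      (fromEdgeSet_mono Set.subset_union_left)
  have hedge : ∀ a b, s(a, b) ∈ T →
      Quotient.mk (contractSetoid S) a ≠ Quotient.mk (contractSetoid S) b →
      (fromEdgeSet (S ∪ T)).Reachable (Quotient.mk (contractSetoid S) a).out
        (Quotient.mk (contractSetoid S) b).out := fun a b hab hne =>
    (hout a).trans
      ((Adj.reachable (G := fromEdgeSet (S ∪ T)) ⟨.inr hab, fun h => hne (h ▸ rfl)⟩).trans
        (hout b).symm)
  constructor
  · intro h
    -- lift the walk along representatives, which are `S`-reachable from the given vertices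
    have hlift := h.lift Quotient.out fun α β hαβ => by
      obtain ⟨⟨z, hz, hzαβ⟩, hne⟩ := hαβ
      induction z using Sym2.ind with | _ a b =>
      rcases Sym2.eq_iff.1 hzαβ with ⟨rfl, rfl⟩ | ⟨rfl, rfl⟩
      · exact hedge a b hz hne
      · exact (hedge a b hz hne.symm).symm
    exact (hout x).symm.trans (hlift.trans (hout y))
  · intro h
    refine contract_mk_eq_iff.1 (h.apply_eq _ fun a b hab => contract_mk_eq_iff.2 ?_)
    obtain ⟨hS | hT, hne⟩ := hab
    · rw [contract_mk_eq_iff.2 (Adj.reachable ⟨hS, hne⟩)]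
    · by_cases he : Quotient.mk (contractSetoid S) a = Quotient.mk (contractSetoid S) b
      · rw [he]
      · exact Adj.reachable ⟨⟨s(a, b), hT, Sym2.map_mk _ _ _⟩, he⟩

noncomputable def contractUnionIso (T : Set (Sym2 V))
    (T' : Set (Sym2 (Quotient (contractSetoid S))))
    (hT' : fromEdgeSet T' = fromEdgeSet (Sym2.map (Quotient.mk (contractSetoid S)) '' T)) :
    contract G (S ∪ T) ≃g contract (contract G S) T' :=
  contractIsoOfSurjective (G := G) (H := contract (contract G S) T')
    (Quotient.mk _ ∘ Quotient.mk _)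
    (Quotient.mk_surjective.comp Quotient.mk_surjective)
    (fun x y => by rw [comp_apply, comp_apply, contract_mk_eq_iff, hT', reachable_map_mk_iff])
    (fun x y hxy hne =>
      ⟨hne, _, _, rfl, rfl, fun h => hne (congrArg (Quotient.mk _) h), x, y, rfl, rfl, hxy⟩)
    (by
      rintro a b ⟨-, α, β, rfl, rfl, -, x, y, rfl, rfl, hxy⟩
      exact ⟨x, y, rfl, rfl, hxy⟩)

end Contraction

noncomputable def contractDiagIso (H : SimpleGraph W) (a : W) : contract H {s(a, a)} ≃g H :=
  contractIsoOfSurjective id surjective_id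
    (fun x y => by
      rw [show fromEdgeSet {s(a, a)} = ⊥ by ext; simp +contextual, reachable_bot, id, id])
    (fun _ _ h _ => h) (fun a b h => ⟨a, b, rfl, rfl, h⟩)

theorem Fin.val_predAbove {m : ℕ} (c : Fin m) (p : Fin (m + 1)) :
    (c.predAbove p : ℕ) = if (c : ℕ) < p then (p : ℕ) - 1 else p := by
  simp only [Fin.predAbove, Fin.lt_def, Fin.val_castSucc]
  split_ifs <;> simp

section PathGraph

variable {m : ℕ} (c : Fin m)

theorem Fin.predAbove_eq_predAbove_iff {p q : Fin (m + 1)} :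
    c.predAbove p = c.predAbove q ↔ p = q ∨ s(p, q) = s(c.castSucc, c.succ) := by
  simp only [Fin.ext_iff, Fin.val_predAbove, Sym2.eq_iff, Fin.val_castSucc, Fin.val_succ]
  split_ifs <;> omega

theorem pathGraph_adj_predAbove {p q : Fin (m + 1)} (h : (pathGraph (m + 1)).Adj p q)
    (hne : c.predAbove p ≠ c.predAbove q) :
    (pathGraph m).Adj (c.predAbove p) (c.predAbove q) := by
  rw [Ne, Fin.ext_iff] at hne
  simp only [pathGraph_adj, Fin.val_predAbove] at h hne ⊢
  split_ifs at hne ⊢ <;> omega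

theorem exists_pathGraph_adj_predAbove {i j : Fin m} (h : (pathGraph m).Adj i j) :
    ∃ p q, c.predAbove p = i ∧ c.predAbove q = j ∧ (pathGraph (m + 1)).Adj p q := by
  rw [pathGraph_adj] at h
  by_cases hc : (i : ℕ) < c ∨ (j : ℕ) < c
  · refine ⟨i.castSucc, j.castSucc, Fin.predAbove_castSucc_of_le _ _ ?_,
      Fin.predAbove_castSucc_of_le _ _ ?_, ?_⟩ <;>
      simp only [Fin.le_def, pathGraph_adj, Fin.val_castSucc] <;> omega
  · refine ⟨i.succ, j.succ, Fin.predAbove_succ_of_le _ _ ?_,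
      Fin.predAbove_succ_of_le _ _ ?_, ?_⟩ <;>
      simp only [Fin.le_def, pathGraph_adj, Fin.val_succ] <;> omega

end PathGraph

theorem IsPathGraph.of_iso {W' : Type*} {H : SimpleGraph W} {H' : SimpleGraph W'}
    (h : IsPathGraph H') (e : H ≃g H') : IsPathGraph H :=
  let ⟨n, ⟨ψ⟩⟩ := h
  ⟨n, ⟨e.trans ψ⟩⟩

theorem IsPathGraph.contract_of_adj {H : SimpleGraph W} (hH : IsPathGraph H) {a b : W}
    (hab : H.Adj a b) : IsPathGraph (contract H {s(a, b)}) := by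
  obtain ⟨n, ⟨ψ⟩⟩ := hH
  have hψ : (pathGraph n).Adj (ψ a) (ψ b) := ψ.map_adj_iff.2 hab
  wlog hlt : (ψ a : ℕ) + 1 = ψ b generalizing a b
  · have hψ' := pathGraph_adj.1 hψ
    rw [Sym2.eq_swap]
    exact this hab.symm hψ.symm (by omega)
  obtain ⟨m, rfl⟩ : ∃ m, n = m + 1 := ⟨n - 1, by omega⟩
  -- `c.predAbove` merges the path vertices `c` and `c + 1` and shifts the later ones down
  set c : Fin m := ⟨ψ a, by omega⟩
  have hc : s(ψ a, ψ b) = s(c.castSucc, c.succ) := by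
    rw [show ψ b = c.succ from Fin.ext hlt.symm]
    rfl
  have hedge : ∀ x y,
      c.predAbove (ψ x) = c.predAbove (ψ y) ↔ x = y ∨ s(x, y) = s(a, b) := by
    intro x y
    rw [Fin.predAbove_eq_predAbove_iff, ← hc, ← Sym2.map_mk, ← Sym2.map_mk,
      (Sym2.map.injective ψ.injective).eq_iff, ψ.injective.eq_iff]
  have hker : ∀ x y, c.predAbove (ψ x) = c.predAbove (ψ y) ↔
      (fromEdgeSet {s(a, b)}).Reachable x y := by
    refine fun x y => ⟨fun h => ?_, fun h => h.apply_eq _ fun x y hxy =>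
      (hedge x y).2 (.inr ((fromEdgeSet_adj _).1 hxy).1)⟩
    rcases (hedge x y).1 h with rfl | he
    · rfl
    by_cases hxy : x = y
    · rw [hxy]
    · exact Adj.reachable ⟨he, hxy⟩
  refine ⟨m, ⟨contractIsoOfSurjective (fun w => c.predAbove (ψ w))
    (c.predAbove_surjective.comp ψ.surjective) hker
    (fun x y hxy => pathGraph_adj_predAbove c (ψ.map_adj_iff.2 hxy)) fun i j hij => ?_⟩⟩
  obtain ⟨p, q, hp, hq, hpq⟩ := exists_pathGraph_adj_predAbove c hij
  exact ⟨ψ.symm p, ψ.symm q, by simpa using hp, by simpa using hq, ψ.symm.map_adj_iff.2 hpq⟩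

theorem IsPathGraph.contract_of_eq_or_adj {H : SimpleGraph W} (hH : IsPathGraph H) {a b : W}
    (hab : a = b ∨ H.Adj a b) : IsPathGraph (contract H {s(a, b)}) := by
  rcases hab with rfl | hab
  · exact hH.of_iso (contractDiagIso H a)
  · exact hH.contract_of_adj hab

theorem IsPathGraph.contract_union_edge {G : SimpleGraph V} {S : Set (Sym2 V)}
    (hG : IsPathGraph (contract G S)) {u v : V} (huv : G.Adj u v) :
    IsPathGraph (contract G (S ∪ {s(u, v)})) :=
  (hG.contract_of_eq_or_adj (contract_mk_eq_or_adj huv)).of_iso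
    (contractUnionIso _ _ (by rw [Set.image_singleton, Sym2.map_mk]))

/-- If `(G, k)` is a yes-instance of Path Contraction and `G'` is obtained from `G`
by contracting an arbitrary edge `{u,v}`, then `(G', k)` is also a yes-instance. -/
theorem stmt_4 (G : SimpleGraph V) (k : ℕ) (u v : V) (huv : G.Adj u v)
    (h : PCYes G k) :
    PCYes (contract G {s(u, v)}) k := by
  classical
  obtain ⟨C, hCG, hCk, hC⟩ := h
  refine ⟨(C.image (Sym2.map (Quotient.mk _))).filter (¬ ·.IsDiag), ?_, ?_, ?_⟩
  · intro z hz
    simp only [Finset.coe_filter, Finset.mem_image] at hz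
    obtain ⟨⟨z, hz, rfl⟩, hdiag⟩ := hz
    exact map_mk_mem_edgeSet_contract (hCG hz) hdiag
  · exact (Finset.card_filter_le _ _).trans (Finset.card_image_le.trans hCk)
  · have hpath := hC.contract_union_edge huv
    rw [Set.union_comm] at hpath
    exact hpath.of_iso (contractUnionIso _ _ (by ext; simp)).symm
end

section
/- If (G,k) is a yes-instance of Path Contraction, then G contains no subtree (subgraph that is a tree) with more than k+2 leaves. -/
open SimpleGraph

variable {V : Type*}

/-!
Number the vertices of the path `G / C` as `0, …, n - 1`; composing with the quotient map
gives an index `V → ℕ` that changes by at most one along every edge of `G`. In a connected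
subgraph `T`, a path from a vertex of minimal index to one of maximal index therefore meets
every index used by `T`, i.e. it has at least as many vertices as `T` meets classes of `C`,
and only its two ends can be leaves of `T`. On the other hand a class spanned by `c` edges of
`C` has at most `c + 1` vertices, so `T` has at most `k` more vertices than classes it meets.
Hence the number of leaves is at most `|T| - |path| + 2 ≤ k + 2`.
-/

namespace SimpleGraph

variable {W : Type*} {H : SimpleGraph W}

lemma Reachable.exists_adj_dist_lt {v r : W} (hr : H.Reachable v r) (hne : v ≠ r) :
    ∃ u, H.Adj v u ∧ H.dist u r < H.dist v r := by
  obtain ⟨p, hp⟩ := hr.exists_walk_length_eq_dist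
  have hnil : ¬p.Nil := Walk.not_nil_of_ne hne
  refine ⟨p.snd, p.adj_snd hnil, ?_⟩
  have := p.length_tail_add_one hnil
  have := dist_le p.tail
  omega

lemma Walk.exists_mem_support_eq_of_le_of_le {f : W → ℕ}
    (hf : ∀ a b, H.Adj a b → f b ≤ f a + 1) {x y : W} (p : H.Walk x y) {j : ℕ}
    (hxj : f x ≤ j) (hjy : j ≤ f y) : ∃ w ∈ p.support, f w = j := by
  induction p with
  | nil => exact ⟨_, Walk.start_mem_support _, le_antisymm hxj hjy⟩
  | @cons u v y huv q ih =>
    rcases hxj.eq_or_lt with rfl | hlt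
    · exact ⟨u, q.support.mem_cons_self, rfl⟩
    · obtain ⟨w, hw, rfl⟩ := ih ((hf u v huv).trans hlt) hjy
      exact ⟨w, List.mem_cons_of_mem _ hw, rfl⟩

lemma Walk.IsPath.ncard_neighborSet_ne_one {x y w : W} {p : H.Walk x y} (hp : p.IsPath)
    (hw : w ∈ p.support) (hwx : w ≠ x) (hwy : w ≠ y) : (H.neighborSet w).ncard ≠ 1 := by
  obtain ⟨i, rfl, hi⟩ := Walk.mem_support_iff_exists_getVert.mp hw
  have hi0 : i ≠ 0 := by rintro rfl; exact hwx p.getVert_zero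
  have hil : i < p.length := hi.lt_of_ne (by rintro rfl; exact hwy p.getVert_length)
  rw [Ne, Set.ncard_eq_one]
  rintro ⟨a, ha⟩
  have hsub : p.toSubgraph.neighborSet (p.getVert i) ⊆ {a} := ha ▸ fun _ h => h.adj_sub
  have := Set.ncard_le_ncard hsub
  rw [hp.ncard_neighborSet_toSubgraph_internal_eq_two hi0 hil, Set.ncard_singleton] at this
  omega

lemma Connected.ncard_leaves_add_ncard_range_le [Finite W] (hH : H.Connected) {f : W → ℕ}
    (hf : ∀ a b, H.Adj a b → f b ≤ f a + 1) :
    {w | (H.neighborSet w).ncard = 1}.ncard + (Set.range f).ncard ≤ Nat.card W + 2 := by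
  classical
  have := hH.nonempty
  obtain ⟨x, hx⟩ := Finite.exists_min f
  obtain ⟨y, hy⟩ := Finite.exists_max f
  obtain ⟨p, hp⟩ := (hH.preconnected x y).some.toPath
  set P : Set W := {w | w ∈ p.support}
  have hrange : Set.range f ⊆ f '' P := by
    rintro _ ⟨w, rfl⟩
    exact p.exists_mem_support_eq_of_le_of_le hf (hx w) (hy w)
  have hleaves : {w | (H.neighborSet w).ncard = 1} ⊆ Pᶜ ∪ {x, y} := by
    intro w hw
    by_contra hw'
    simp only [Set.mem_union, Set.mem_compl_iff, Set.mem_insert_iff, Set.mem_singleton_iff,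
      not_or, not_not] at hw'
    exact hp.ncard_neighborSet_ne_one hw'.1 hw'.2.1 hw'.2.2 hw
  calc {w | (H.neighborSet w).ncard = 1}.ncard + (Set.range f).ncard
      ≤ (Pᶜ.ncard + ({x, y} : Set W).ncard) + P.ncard := by
        gcongr
        · exact (Set.ncard_le_ncard hleaves).trans (Set.ncard_union_le _ _)
        · exact (Set.ncard_le_ncard hrange).trans Set.ncard_image_le
    _ ≤ (Pᶜ.ncard + 2) + P.ncard := by
        gcongr
        exact (Set.ncard_insert_le x {y}).trans_eq (by rw [Set.ncard_singleton])
    _ = Nat.card W + 2 := by rw [← Set.ncard_add_ncard_compl P]; ring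

end SimpleGraph

/-- Each vertex other than the chosen representative of its class is sent to an edge of `C`
leading strictly closer to that representative. -/
lemma exists_injective_quotient_sum (C : Set (Sym2 V)) :
    ∃ f : V → Quotient (contractSetoid C) ⊕ C, f.Injective ∧
      ∀ v q, f v = .inl q → q = Quotient.mk _ v := by
  classical
  let r : V → V := fun v => (Quotient.mk (contractSetoid C) v).out
  have hr : ∀ v, (fromEdgeSet C).Reachable v (r v) := fun v =>
    Quotient.exact (Quotient.out_eq (Quotient.mk (contractSetoid C) v)).symm
  choose! next hadj hdist using fun v (hv : v ≠ r v) => (hr v).exists_adj_dist_lt hv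
  have hr_next : ∀ v, v ≠ r v → r (next v) = r v := fun v hv =>
    congrArg Quotient.out (Quotient.sound (hadj v hv).reachable.symm)
  refine ⟨fun v => if hv : v = r v then .inl (Quotient.mk _ v)
    else .inr ⟨s(v, next v), ((fromEdgeSet_adj _).mp (hadj v hv)).1⟩, ?_, ?_⟩
  · intro a b hab
    dsimp only at hab
    split_ifs at hab with ha hb hb
    · rw [ha, hb]
      exact congrArg Quotient.out (Sum.inl.inj hab)
    · rcases Sym2.eq_iff.mp (congrArg Subtype.val (Sum.inr.inj hab)) with
        ⟨rfl, -⟩ | ⟨rfl, hb'⟩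
      · rfl
      · have h₁ := hdist _ ha
        have h₂ := hdist _ hb
        rw [hb', hr_next _ hb] at h₁
        omega
  · intro v q hq
    dsimp only at hq
    split_ifs at hq
    exact (Sum.inl.inj hq).symm

lemma finite_of_finite_quotient_contractSetoid {C : Set (Sym2 V)} (hC : C.Finite)
    [Finite (Quotient (contractSetoid C))] : Finite V :=
  have := hC.to_subtype
  have ⟨_, hf, _⟩ := exists_injective_quotient_sum C
  Finite.of_injective _ hf

lemma ncard_le_ncard_image_mk_add_ncard [Finite V] (C : Set (Sym2 V)) (S : Set V) :
    S.ncard ≤ (Quotient.mk (contractSetoid C) '' S).ncard + C.ncard := by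
  obtain ⟨f, hf, hf_inl⟩ := exists_injective_quotient_sum C
  have hmaps : f '' S ⊆ Sum.inl '' (Quotient.mk _ '' S) ∪ Set.range Sum.inr := by
    rintro _ ⟨v, hv, rfl⟩
    cases hfv : f v with
    | inl q => exact Or.inl ⟨q, ⟨v, hv, (hf_inl v q hfv).symm⟩, rfl⟩
    | inr c => exact Or.inr ⟨c, rfl⟩
  calc S.ncard = (f '' S).ncard := (Set.ncard_image_of_injective S hf).symm
    _ ≤ (Sum.inl '' (Quotient.mk _ '' S) ∪ Set.range Sum.inr).ncard := Set.ncard_le_ncard hmaps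
    _ ≤ (Quotient.mk _ '' S).ncard + C.ncard := by
      refine (Set.ncard_union_le _ _).trans_eq ?_
      rw [Set.ncard_image_of_injective _ Sum.inl_injective,
        Set.ncard_range_of_injective Sum.inr_injective, Nat.card_coe_set_eq]

lemma val_apply_mk_le_add_one_of_adj {G : SimpleGraph V} {C : Set (Sym2 V)} {n : ℕ}
    (e : contract G C ≃g pathGraph n) {u v : V} (huv : G.Adj u v) :
    (e (Quotient.mk _ v)).val ≤ (e (Quotient.mk _ u)).val + 1 := by
  by_cases hq : Quotient.mk (contractSetoid C) u = Quotient.mk _ v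
  · rw [hq]; omega
  · have := pathGraph_adj.mp (e.map_adj_iff.mpr ⟨hq, u, v, rfl, rfl, huv⟩)
    omega

/-- If `(G, k)` is a yes-instance of Path Contraction, then `G` contains no subtree
(subgraph that is a tree) with more than `k + 2` leaves. -/
theorem stmt_5 (G : SimpleGraph V) (k : ℕ) (h : PCYes G k) :
    ∀ T : G.Subgraph, T.coe.IsTree →
      {w : T.verts | (T.coe.neighborSet w).ncard = 1}.ncard ≤ k + 2 := by
  obtain ⟨C, -, hCk, n, ⟨e⟩⟩ := h
  intro T hT
  have : Finite (Quotient (contractSetoid (C : Set (Sym2 V)))) := .of_equiv _ e.toEquiv.symm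
  have : Finite V := finite_of_finite_quotient_contractSetoid C.finite_toSet
  let π := Quotient.mk (contractSetoid (C : Set (Sym2 V)))
  let index : Quotient (contractSetoid (C : Set (Sym2 V))) → ℕ := fun q => (e q).val
  have hleaves := hT.connected.ncard_leaves_add_ncard_range_le
    (f := fun w : T.verts => index (π w))
    fun _ _ hab => val_apply_mk_le_add_one_of_adj e (T.adj_sub hab)
  have hrange : (Set.range fun w : T.verts => index (π w)).ncard = (π '' T.verts).ncard := by
    rw [← Set.ncard_image_of_injective _ (Fin.val_injective.comp e.injective), Set.image_image]
    exact congrArg Set.ncard (Set.image_eq_range (fun v => index (π v)) T.verts).symm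
  have hverts : T.verts.ncard ≤ (π '' T.verts).ncard + C.card :=
    (ncard_le_ncard_image_mk_add_ncard _ T.verts).trans_eq (by rw [Set.ncard_coe_finset])
  rw [Nat.card_coe_set_eq] at hleaves
  omega
end
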